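/- Let n ≥ 2 and let A_{n-1} be the n×n arrowhead matrix with diagonal entries λ^(n-1)_1,…,λ^(n-1)_{n-1} (assumed pairwise distinct), last column a_1,…,a_{n-1} with every a_k ≠ 0, last row b_1,…,b_{n-1}, and corner entry a_nn. Let λ^(n)_1,…,λ^(n)_n satisfy det(A_{n-1} − x·Id) = ∏_i(λ^(n)_i − x), and assume λ^(n-1)_i − λ^(n-1)_k ∉ 2πi·(ℤ∖{0}) for all i,k. Let δ_{n-1}(A_{n-1}) = diag(λ^(n-1)_1,…,λ^(n-1)_{n-1}, a_nn) and let (K_m)_{m≥0} be the unique sequence with K_0 = Id_n and [K_{m+1}, i·E_n] = −(1/(2πi))·A_{n-1}·K_m + K_m·( (1/(2πi))·δ_{n-1}(A_{n-1}) + m·Id ) for all m ≥ 0, where E_n is the matrix unit at (n,n). Then the entries of K_1 are given by: (K_1)_{in} = a_i/(2π) for 1 ≤ i ≤ n−1; (K_1)_{nk} = −(2π/a_k)·∏_{l=1}^{n}( (λ^(n)_l − λ^(n-1)_k)/(2πi) ) / ∏_{l=1,l≠k}^{n-1}( (λ^(n-1)_l − λ^(n-1)_k)/(2πi) ) for 1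 ≤ k ≤ n−1; and (K_1)_{ik} = −i·(a_i/a_k)·∏_{l=1}^{n}( (λ^(n)_l − λ^(n-1)_k)/(2πi) ) / [ ∏_{l=1,l≠k}^{n-1}( (λ^(n-1)_l − λ^(n-1)_k)/(2πi) ) · ( (λ^(n-1)_i − λ^(n-1)_k)/(2πi) − 1 ) ] for 1 ≤ i ≠ k ≤ n−1. -/

import Mathlib

/-!
At `M = 0` the recursion reads `[K 1, i E] = (δ(A) - A) / 2πi`, whose only nonzero entries lie in
the last row and column; this determines the last row and column of `K 1`, namely `a i / 2π` and
`-b k / 2π`. At `M = 1` the `(i, k)` entry above the last row gives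
`K 1 i k * ((λ_i - λ_k) / 2πi - 1) = -(a i / 2πi) * K 1 n k`, and non-resonance makes the factor
invertible. Finally `b k` is traded for the eigenvalues: expanding `det (A - λ_k)` along row `k`
and then column `k` gives `∏ l, (λ^(n)_l - λ_k) = -a k * b k * ∏ l ≠ k, (λ_l - λ_k)`.
-/

open Matrix Finset

noncomputable section

/-- `2πi` as a complex number. -/
def twoPiI : ℂ := 2 * (Real.pi : ℂ) * Complex.I

/-- The `(m+2) × (m+2)` arrowhead matrix with diagonal data `μ`, last column `a`,
last row `b`, and corner entry `c`. -/
def arrowhead (m : ℕ) (μ a b : Fin (m+1) → ℂ) (c : ℂ) :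
    Matrix (Fin (m+2)) (Fin (m+2)) ℂ := fun i j =>
  if hi : i = Fin.last (m+1) then
    if hj : j = Fin.last (m+1) then c else b (j.castPred hj)
  else
    if hj : j = Fin.last (m+1) then a (i.castPred hi)
    else if i = j then μ (i.castPred hi) else 0

lemma twoPiI_ne_zero : twoPiI ≠ 0 := Complex.two_pi_I_ne_zero

lemma Fin.prod_univ_erase_eq_prod_succAbove {M : Type*} [CommMonoid M] {n : ℕ}
    (k : Fin (n + 1)) (f : Fin (n + 1) → M) :
    ∏ l ∈ univ.erase k, f l = ∏ i : Fin n, f (k.succAbove i) := by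
  rw [← compl_singleton, ← Fin.image_succAbove_univ,
    prod_image Fin.succAbove_right_injective.injOn]

section arrowhead

variable {m : ℕ} (μ a b : Fin (m+1) → ℂ) (c : ℂ)

@[simp]
lemma arrowhead_last_last : arrowhead m μ a b c (Fin.last _) (Fin.last _) = c := by
  simp [arrowhead]

@[simp]
lemma arrowhead_last_castSucc (j : Fin (m+1)) :
    arrowhead m μ a b c (Fin.last _) j.castSucc = b j := by
  simp [arrowhead, (Fin.castSucc_lt_last j).ne]

@[simp]
lemma arrowhead_castSucc_last (i : Fin (m+1)) :
    arrowhead m μ a b c i.castSucc (Fin.last _) = a i := by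
  simp [arrowhead, (Fin.castSucc_lt_last i).ne]

@[simp]
lemma arrowhead_castSucc_castSucc (i j : Fin (m+1)) :
    arrowhead m μ a b c i.castSucc j.castSucc = diagonal μ i j := by
  simp [arrowhead, (Fin.castSucc_lt_last i).ne, (Fin.castSucc_lt_last j).ne, diagonal_apply]

lemma arrowhead_sub_smul_one (x : ℂ) :
    arrowhead m μ a b c - x • (1 : Matrix (Fin (m+2)) (Fin (m+2)) ℂ)
      = arrowhead m (fun l => μ l - x) a b (c - x) := by
  ext i j
  induction i using Fin.lastCases <;> induction j using Fin.lastCases <;>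
    simp [one_apply, diagonal_apply, (Fin.castSucc_lt_last _).ne', ite_sub_ite]

lemma arrowhead_mul_apply_castSucc (X : Matrix (Fin (m+2)) (Fin (m+2)) ℂ) (i : Fin (m+1))
    (j : Fin (m+2)) :
    (arrowhead m μ a b c * X) i.castSucc j = μ i * X i.castSucc j + a i * X (Fin.last _) j := by
  simp [mul_apply, Fin.sum_univ_castSucc, diagonal_apply]

lemma det_arrowhead_of_eq_zero {k : Fin (m+1)} (hk : μ k = 0) :
    (arrowhead m μ a b c).det = -(a k * b k * ∏ l ∈ univ.erase k, μ l) := by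
  rw [det_succ_row _ k.castSucc, Fin.sum_univ_castSucc]
  simp only [Fin.val_castSucc, arrowhead_castSucc_castSucc, diagonal_apply, hk, ite_self,
    mul_zero, zero_mul, sum_const_zero, Fin.val_last, arrowhead_castSucc_last, Fin.succAbove_last,
    zero_add]
  rw [det_succ_column _ k, Fin.sum_univ_castSucc]
  simp only [Fin.val_castSucc, submatrix_apply, Fin.castSucc_succAbove_castSucc,
    arrowhead_castSucc_castSucc, Fin.succAbove_ne, ne_eq, not_false_eq_true, diagonal_apply_ne,
    mul_zero, submatrix_submatrix, zero_mul, sum_const_zero, Fin.val_last,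
    Fin.castSucc_ne_last, Fin.succAbove_ne_last_last, arrowhead_last_castSucc, Fin.succAbove_last,
    zero_add]
  have hminor : (arrowhead m μ a b c).submatrix (k.castSucc.succAbove ∘ Fin.castSucc)
      (Fin.castSucc ∘ k.succAbove) = diagonal (fun i => μ (k.succAbove i)) := by
    ext i j
    simp [diagonal_apply, Fin.succAbove_right_injective.eq_iff]
  rw [hminor, det_diagonal, Fin.prod_univ_erase_eq_prod_succAbove]
  have hsign : (-1 : ℂ) ^ ((k : ℕ) + (m + 1)) * (-1) ^ (m + (k : ℕ)) = -1 := by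
    rw [← pow_add, show (k : ℕ) + (m + 1) + (m + k) = 2 * (k + m) + 1 by ring, pow_succ, pow_mul]
    simp
  linear_combination (a k * b k * ∏ i : Fin m, μ (k.succAbove i)) * hsign

lemma det_arrowhead_sub_smul_one_self (k : Fin (m+1)) :
    (arrowhead m μ a b c - μ k • (1 : Matrix (Fin (m+2)) (Fin (m+2)) ℂ)).det
      = -(a k * b k * ∏ l ∈ univ.erase k, (μ l - μ k)) := by
  rw [arrowhead_sub_smul_one]
  exact det_arrowhead_of_eq_zero _ _ _ _ (sub_self _)

lemma prod_sub_div_prod_erase_sub {lamn : Fin (m+2) → ℂ} (hμ : Function.Injective μ)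
    (hlamn : ∀ x : ℂ,
      (arrowhead m μ a b c - x • (1 : Matrix (Fin (m+2)) (Fin (m+2)) ℂ)).det
        = ∏ i, (lamn i - x))
    {t : ℂ} (ht : t ≠ 0) (k : Fin (m+1)) :
    (∏ l, ((lamn l - μ k) / t)) / (∏ l ∈ univ.erase k, ((μ l - μ k) / t))
      = -(a k * b k) / t ^ 2 := by
  have hQ : ∏ l ∈ univ.erase k, (μ l - μ k) ≠ 0 :=
    prod_ne_zero_iff.2 fun l hl => sub_ne_zero.2 (hμ.ne (ne_of_mem_erase hl))
  rw [prod_div_distrib, prod_div_distrib, prod_const, prod_const, card_erase_of_mem (mem_univ k),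
    card_fin, card_fin, Nat.add_sub_cancel, ← hlamn, det_arrowhead_sub_smul_one_self]
  field_simp
  ring

end arrowhead

def FormalRecursion (m : ℕ) (μ a b : Fin (m+1) → ℂ) (c : ℂ)
    (K : ℕ → Matrix (Fin (m+2)) (Fin (m+2)) ℂ) : Prop :=
  ∀ M : ℕ,
    K (M+1) * (Complex.I • Matrix.single (Fin.last (m+1)) (Fin.last (m+1)) (1 : ℂ))
      - (Complex.I • Matrix.single (Fin.last (m+1)) (Fin.last (m+1)) (1 : ℂ)) * K (M+1)
    = -((1 / twoPiI) • (arrowhead m μ a b c * K M))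
      + K M * ((1 / twoPiI) • Matrix.diagonal (Fin.snoc μ c)
          + (M : ℂ) • (1 : Matrix (Fin (m+2)) (Fin (m+2)) ℂ))

namespace FormalRecursion

variable {m : ℕ} {μ a b : Fin (m+1) → ℂ} {c : ℂ} {K : ℕ → Matrix (Fin (m+2)) (Fin (m+2)) ℂ}

lemma one_castSucc_last (hK : FormalRecursion m μ a b c K) (hK0 : K 0 = 1) (i : Fin (m+1)) :
    K 1 i.castSucc (Fin.last _) = a i / (2 * Real.pi) := by
  have h : Complex.I * K 1 i.castSucc (Fin.last _) = -(a i * twoPiI⁻¹) := by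
    simpa [hK0, smul_single, (Fin.castSucc_lt_last _).ne, mul_comm]
      using congr_fun₂ (hK 0) i.castSucc (Fin.last _)
  rw [twoPiI] at h
  field_simp at h ⊢
  linear_combination -h + 2 * Real.pi * K 1 i.castSucc (Fin.last _) * Complex.I_sq

lemma one_last_castSucc (hK : FormalRecursion m μ a b c K) (hK0 : K 0 = 1) (k : Fin (m+1)) :
    K 1 (Fin.last _) k.castSucc = -b k / (2 * Real.pi) := by
  have h : Complex.I * K 1 (Fin.last _) k.castSucc = twoPiI⁻¹ * b k := by
    simpa [hK0, smul_single, (Fin.castSucc_lt_last _).ne']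
      using congr_fun₂ (hK 0) (Fin.last _) k.castSucc
  rw [twoPiI] at h
  field_simp at h ⊢
  linear_combination -h + 2 * Real.pi * K 1 (Fin.last _) k.castSucc * Complex.I_sq

lemma one_castSucc_castSucc (hK : FormalRecursion m μ a b c K) (i k : Fin (m+1)) :
    K 1 i.castSucc k.castSucc * ((μ i - μ k) / twoPiI - 1)
      = -(a i / twoPiI * K 1 (Fin.last _) k.castSucc) := by
  have h : 0 = -(twoPiI⁻¹ * (μ i * K 1 i.castSucc k.castSucc + a i * K 1 (Fin.last _) k.castSucc))
      + (twoPiI⁻¹ * (K 1 i.castSucc k.castSucc * μ k) + K 1 i.castSucc k.castSucc) := by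
    simpa [smul_single, arrowhead_mul_apply_castSucc, Matrix.mul_add, mul_diagonal]
      using congr_fun₂ (hK 1) i.castSucc k.castSucc
  field_simp [twoPiI_ne_zero] at h ⊢
  linear_combination h

end FormalRecursion

/-- explicit entries of `K_1` in the formal-solution recursion for
the arrowhead system. -/
theorem stmt9 (m : ℕ) (lam' a b : Fin (m+1) → ℂ) (ann : ℂ)
    (hdist : Function.Injective lam')
    (ha : ∀ k, a k ≠ 0)
    (lamn : Fin (m+2) → ℂ)
    (hlamn : ∀ x : ℂ,
      (arrowhead m lam' a b ann - x • (1 : Matrix (Fin (m+2)) (Fin (m+2)) ℂ)).det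
        = ∏ i, (lamn i - x))
    (hres : ∀ (i k : Fin (m+1)) (N : ℤ), N ≠ 0 → lam' i - lam' k ≠ twoPiI * (N : ℂ))
    (K : ℕ → Matrix (Fin (m+2)) (Fin (m+2)) ℂ)
    (hK0 : K 0 = 1)
    (hKrec : ∀ M : ℕ,
      K (M+1) * (Complex.I •
          Matrix.single (Fin.last (m+1)) (Fin.last (m+1)) (1 : ℂ))
        - (Complex.I •
          Matrix.single (Fin.last (m+1)) (Fin.last (m+1)) (1 : ℂ)) * K (M+1)
      = -((1 / twoPiI) • (arrowhead m lam' a b ann * K M))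
        + K M * ((1 / twoPiI) • Matrix.diagonal (Fin.snoc lam' ann)
            + (M : ℂ) • (1 : Matrix (Fin (m+2)) (Fin (m+2)) ℂ))) :
    (∀ i : Fin (m+1),
      K 1 i.castSucc (Fin.last (m+1)) = a i / (2 * (Real.pi : ℂ))) ∧
    (∀ k : Fin (m+1),
      K 1 (Fin.last (m+1)) k.castSucc
        = -((2 * (Real.pi : ℂ)) / a k) *
            (∏ l, ((lamn l - lam' k) / twoPiI)) /
            (∏ l ∈ Finset.univ.erase k, ((lam' l - lam' k) / twoPiI))) ∧
    (∀ i k : Fin (m+1), i ≠ k →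
      K 1 i.castSucc k.castSucc
        = -Complex.I * (a i / a k) *
            (∏ l, ((lamn l - lam' k) / twoPiI)) /
            ((∏ l ∈ Finset.univ.erase k, ((lam' l - lam' k) / twoPiI)) *
              ((lam' i - lam' k) / twoPiI - 1))) := by
  have hK : FormalRecursion m lam' a b ann K := hKrec
  have hratio := prod_sub_div_prod_erase_sub lam' a b ann hdist hlamn twoPiI_ne_zero
  refine ⟨hK.one_castSucc_last hK0, fun k => ?_, fun i k _ => ?_⟩
  · rw [mul_div_assoc, hratio, hK.one_last_castSucc hK0, twoPiI]
    field_simp [ha k]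
    linear_combination -b k * Complex.I_sq
  · have hδ : (lam' i - lam' k) / twoPiI - 1 ≠ 0 := by
      rw [sub_ne_zero, ne_eq, div_eq_one_iff_eq twoPiI_ne_zero]
      simpa using hres i k 1 one_ne_zero
    rw [← div_div, mul_div_assoc (-Complex.I * _), hratio,
      eq_div_of_mul_eq hδ (hK.one_castSucc_castSucc i k), div_left_inj' hδ,
      hK.one_last_castSucc hK0, twoPiI]
    field_simp [ha k]
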